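/- Suppose φ : U₁ → H₁ is (H₁,H₂)-tame. Then for every x ∈ U₁ there exist an H₁-open neighborhood W ⊆ U₁ of x and a single constant κ > 0 such that for every y ∈ W ∩ H₂ and all ξ, η ∈ H₂ the following three estimates hold simultaneously: |φ(y)|₂ ≤ κ(1 + |y|₂); |d(φ|_{U₂})|_y η|₂ ≤ κ(|η|₂ + |y|₂|η|₁); and |d²(φ|_{U₂})|_y(ξ,η)|₂ ≤ κ(|ξ|₁|η|₂ + |ξ|₂|η|₁ + |y|₂|ξ|₁|η|₁). -/

import Mathlib

/-!
The second-order estimate is part of the hypothesis; the lower-order ones follow by integrating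
it twice along segments in `H₂`. Fix a small `H₁`-ball around `x` inside the neighbourhood where
the second-order estimate holds, and (by density) a base point `y₀ ∈ H₂` whose image lies in that
ball. For `y` in the ball, `|y - y₀|₁` is bounded by the diameter of the ball, so integrating
`d²φ₂(·)(y - y₀, η)` from `y₀` to `y` and using `|·|₁ ≤ |·|₂` gives the first-order estimate;
integrating `dφ₂(·)(y - y₀)` the same way gives the zeroth-order one.
-/

open Metric Set

def IsTame {H₁ H₂ : Type*}
    [NormedAddCommGroup H₁] [InnerProductSpace ℝ H₁] [CompleteSpace H₁]
    [NormedAddCommGroup H₂] [InnerProductSpace ℝ H₂] [CompleteSpace H₂]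
    (ι : H₂ →L[ℝ] H₁) (U₁ : Set H₁) (φ : H₁ → H₁) (φ₂ : H₂ → H₂) : Prop :=
  ContDiffOn ℝ 2 φ U₁ ∧
  (∀ y : H₂, ι y ∈ U₁ → φ (ι y) = ι (φ₂ y)) ∧
  ContDiffOn ℝ 2 φ₂ (ι ⁻¹' U₁) ∧
  ∀ x ∈ U₁, ∃ W : Set H₁, W ⊆ U₁ ∧ IsOpen W ∧ x ∈ W ∧ ∃ κ : ℝ, 0 < κ ∧
    ∀ y : H₂, ι y ∈ W → ∀ ξ η : H₂,
      ‖fderiv ℝ (fderiv ℝ φ₂) y ξ η‖ ≤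
        κ * (‖ι ξ‖ * ‖η‖ + ‖ξ‖ * ‖ι η‖ + ‖y‖ * ‖ι ξ‖ * ‖ι η‖)

section SegmentEstimates

variable {E F : Type*} [NormedAddCommGroup E] [NormedSpace ℝ E]
  [NormedAddCommGroup F] [NormedSpace ℝ F]

theorem norm_le_add_of_mem_segment {a b z : E} (hz : z ∈ segment ℝ a b) :
    ‖z‖ ≤ ‖a‖ + ‖b‖ :=
  ((convexOn_norm convex_univ).le_max_of_mem_segment (mem_univ a) (mem_univ b) hz).trans
    (max_le_add_of_nonneg (norm_nonneg a) (norm_nonneg b))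

theorem norm_sub_le_of_norm_fderiv_apply_le_segment {f : E → F} {f' : E → E →L[ℝ] F}
    {a b : E} {C : ℝ} (hf : ∀ z ∈ segment ℝ a b, HasFDerivAt f (f' z) z)
    (hC : ∀ z ∈ segment ℝ a b, ‖f' z (b - a)‖ ≤ C) : ‖f b - f a‖ ≤ C := by
  have hmem : ∀ t ∈ Icc (0 : ℝ) 1, a + t • (b - a) ∈ segment ℝ a b := fun t ht =>
    segment_eq_image' ℝ a b ▸ mem_image_of_mem _ ht
  have hline (t : ℝ) : HasDerivAt (fun s : ℝ => a + s • (b - a)) (b - a) t := by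
    simpa using ((hasDerivAt_id t).smul_const (b - a)).const_add a
  simpa using norm_image_sub_le_of_norm_deriv_le_segment_01'
    (f := fun t => f (a + t • (b - a)))
    (fun t ht => ((hf _ (hmem t ht)).comp_hasDerivAt t (hline t)).hasDerivWithinAt)
    (fun t ht => hC _ (hmem t (Ico_subset_Icc_self ht)))

end SegmentEstimates

section TameEstimates

variable {E F G : Type*} [NormedAddCommGroup E] [NormedSpace ℝ E]
  [NormedAddCommGroup F] [NormedSpace ℝ F] [NormedAddCommGroup G] [NormedSpace ℝ G]
  (ι : E →L[ℝ] G) {s : Set E} {y₀ : E} {ρ κ : ℝ}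

theorem exists_tame_fderiv_of_tame_fderiv2 {f : E → F} (hs : Convex ℝ s)
    (hf : ∀ z ∈ s, ContDiffAt ℝ 2 f z) (hy₀ : y₀ ∈ s) (hκ : 0 ≤ κ)
    (hρ : ∀ y ∈ s, ‖ι (y - y₀)‖ ≤ ρ) (hι : ∀ η, ‖ι η‖ ≤ ‖η‖)
    (h2 : ∀ y ∈ s, ∀ ξ η, ‖fderiv ℝ (fderiv ℝ f) y ξ η‖ ≤
      κ * (‖ι ξ‖ * ‖η‖ + ‖ξ‖ * ‖ι η‖ + ‖y‖ * ‖ι ξ‖ * ‖ι η‖)) :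
    ∃ K, 0 ≤ K ∧ ∀ y ∈ s, ∀ η, ‖fderiv ℝ f y η‖ ≤ K * (‖η‖ + ‖y‖ * ‖ι η‖) := by
  have hρ0 : 0 ≤ ρ := by simpa using hρ y₀ hy₀
  refine ⟨‖fderiv ℝ f y₀‖ + κ * ((1 + ρ) * (1 + ‖y₀‖)), by positivity, fun y hy η => ?_⟩
  have hseg := hs.segment_subset hy₀ hy
  have hincr : ‖fderiv ℝ f y η - fderiv ℝ f y₀ η‖ ≤
      κ * ((1 + ρ) * (1 + ‖y₀‖) * (‖η‖ + ‖y‖ * ‖ι η‖)) := by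
    refine norm_sub_le_of_norm_fderiv_apply_le_segment (f := fun z => fderiv ℝ f z η)
      (f' := fun z => (ContinuousLinearMap.apply ℝ F η).comp (fderiv ℝ (fderiv ℝ f) z))
      (fun z hz => ?_) (fun z hz => ?_)
    · have hD := ((hf z (hseg hz)).fderiv_right (m := 1) le_rfl).differentiableAt one_ne_zero
      exact (ContinuousLinearMap.apply ℝ F η).hasFDerivAt.comp z hD.hasFDerivAt
    · have hz_norm := (norm_le_add_of_mem_segment hz).trans_eq (add_comm _ _)
      have hιη := hι η
      calc _ ≤ κ * (‖ι (y - y₀)‖ * ‖η‖ + ‖y - y₀‖ * ‖ι η‖ + ‖z‖ * ‖ι (y - y₀)‖ * ‖ι η‖) :=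
            h2 z (hseg hz) _ _
        _ ≤ κ * (ρ * ‖η‖ + (‖y‖ + ‖y₀‖) * ‖ι η‖ + (‖y‖ + ‖y₀‖) * ρ * ‖ι η‖) := by
            gcongr
            exacts [hρ y hy, norm_sub_le y y₀, hρ y hy]
        _ ≤ κ * ((1 + ρ) * (1 + ‖y₀‖) * (‖η‖ + ‖y‖ * ‖ι η‖)) := by
            gcongr
            nlinarith [norm_nonneg y, norm_nonneg y₀, norm_nonneg (ι η),
              mul_nonneg (norm_nonneg y₀) (sub_nonneg.2 hιη),
              mul_nonneg (mul_nonneg hρ0 (norm_nonneg y₀)) (sub_nonneg.2 hιη),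
              mul_nonneg (mul_nonneg (norm_nonneg y) (norm_nonneg y₀)) (norm_nonneg (ι η)),
              mul_nonneg (mul_nonneg (mul_nonneg hρ0 (norm_nonneg y)) (norm_nonneg y₀))
                (norm_nonneg (ι η))]
  calc ‖fderiv ℝ f y η‖ ≤ ‖fderiv ℝ f y₀ η‖ + ‖fderiv ℝ f y η - fderiv ℝ f y₀ η‖ :=
        norm_le_insert' _ _
    _ ≤ ‖fderiv ℝ f y₀‖ * (‖η‖ + ‖y‖ * ‖ι η‖) +
        κ * ((1 + ρ) * (1 + ‖y₀‖) * (‖η‖ + ‖y‖ * ‖ι η‖)) := by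
        gcongr
        exact ((fderiv ℝ f y₀).le_opNorm η).trans
          (by gcongr; exact le_add_of_nonneg_right (by positivity))
    _ = _ := by ring

theorem exists_tame_of_tame_fderiv {f : E → F} (hs : Convex ℝ s)
    (hf : ∀ z ∈ s, DifferentiableAt ℝ f z) (hy₀ : y₀ ∈ s) (hκ : 0 ≤ κ)
    (hρ : ∀ y ∈ s, ‖ι (y - y₀)‖ ≤ ρ)
    (h1 : ∀ y ∈ s, ∀ η, ‖fderiv ℝ f y η‖ ≤ κ * (‖η‖ + ‖y‖ * ‖ι η‖)) :
    ∃ K, 0 ≤ K ∧ ∀ y ∈ s, ‖f y‖ ≤ K * (1 + ‖y‖) := by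
  have hρ0 : 0 ≤ ρ := by simpa using hρ y₀ hy₀
  refine ⟨‖f y₀‖ + κ * ((1 + ρ) * (1 + ‖y₀‖)), by positivity, fun y hy => ?_⟩
  have hseg := hs.segment_subset hy₀ hy
  have hincr : ‖f y - f y₀‖ ≤ κ * ((1 + ρ) * (1 + ‖y₀‖) * (1 + ‖y‖)) := by
    refine norm_sub_le_of_norm_fderiv_apply_le_segment
      (fun z hz => (hf z (hseg hz)).hasFDerivAt) (fun z hz => ?_)
    have hz_norm := (norm_le_add_of_mem_segment hz).trans_eq (add_comm _ _)
    calc _ ≤ κ * (‖y - y₀‖ + ‖z‖ * ‖ι (y - y₀)‖) := h1 z (hseg hz) _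
      _ ≤ κ * ((‖y‖ + ‖y₀‖) + (‖y‖ + ‖y₀‖) * ρ) := by
          gcongr
          exacts [norm_sub_le y y₀, hρ y hy]
      _ ≤ κ * ((1 + ρ) * (1 + ‖y₀‖) * (1 + ‖y‖)) := by
          gcongr
          nlinarith [norm_nonneg y, norm_nonneg y₀, mul_nonneg (norm_nonneg y) (norm_nonneg y₀),
            mul_nonneg hρ0 (mul_nonneg (norm_nonneg y) (norm_nonneg y₀))]
  calc ‖f y‖ ≤ ‖f y₀‖ + ‖f y - f y₀‖ := norm_le_insert' _ _
    _ ≤ ‖f y₀‖ * (1 + ‖y‖) + κ * ((1 + ρ) * (1 + ‖y₀‖) * (1 + ‖y‖)) := by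
        gcongr
        exact le_mul_of_one_le_right (norm_nonneg _) (le_add_of_nonneg_right (norm_nonneg _))
    _ = _ := by ring

end TameEstimates

theorem tame_combined_estimates_general {H₁ H₂ : Type*}
    [NormedAddCommGroup H₁] [InnerProductSpace ℝ H₁] [CompleteSpace H₁]
    [NormedAddCommGroup H₂] [InnerProductSpace ℝ H₂] [CompleteSpace H₂]
    (ι : H₂ →L[ℝ] H₁)
    (hι_dense : DenseRange ι) (hι_norm : ∀ x : H₂, ‖ι x‖ ≤ ‖x‖)
    {U₁ : Set H₁} (hU₁ : IsOpen U₁)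
    {φ : H₁ → H₁} {φ₂ : H₂ → H₂} (hφ : IsTame ι U₁ φ φ₂) :
    ∀ x ∈ U₁, ∃ W : Set H₁, W ⊆ U₁ ∧ IsOpen W ∧ x ∈ W ∧ ∃ κ : ℝ, 0 < κ ∧
      ∀ y : H₂, ι y ∈ W → ∀ ξ η : H₂,
        ‖φ₂ y‖ ≤ κ * (1 + ‖y‖) ∧
        ‖fderiv ℝ φ₂ y η‖ ≤ κ * (‖η‖ + ‖y‖ * ‖ι η‖) ∧
        ‖fderiv ℝ (fderiv ℝ φ₂) y ξ η‖ ≤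
          κ * (‖ι ξ‖ * ‖η‖ + ‖ξ‖ * ‖ι η‖ + ‖y‖ * ‖ι ξ‖ * ‖ι η‖) := by
  obtain ⟨-, -, hφ₂, htame⟩ := hφ
  intro x hx
  obtain ⟨W, hWU, hW, hxW, κ₂, hκ₂, h2⟩ := htame x hx
  obtain ⟨r, hr, hrW⟩ := Metric.isOpen_iff.1 hW x hxW
  obtain ⟨y₀, hy₀⟩ := hι_dense.exists_dist_lt x hr
  have hs : Convex ℝ (ι ⁻¹' ball x r) := (convex_ball x r).linear_preimage ι.toLinearMap
  have hy₀s : y₀ ∈ ι ⁻¹' ball x r := by rwa [mem_preimage, mem_ball, dist_comm]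
  have hρ : ∀ y ∈ ι ⁻¹' ball x r, ‖ι (y - y₀)‖ ≤ 2 * r := fun y hy => by
    rw [map_sub, ← dist_eq_norm]
    linarith [dist_triangle_right (ι y) (ι y₀) x, mem_ball.1 hy, mem_ball.1 hy₀s]
  have hC2 : ∀ z ∈ ι ⁻¹' ball x r, ContDiffAt ℝ 2 φ₂ z := fun z hz =>
    hφ₂.contDiffAt ((hU₁.preimage ι.continuous).mem_nhds (hWU (hrW hz)))
  obtain ⟨κ₁, hκ₁, h1⟩ := exists_tame_fderiv_of_tame_fderiv2 ι hs hC2 hy₀s hκ₂.le hρ hι_norm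
    fun y hy => h2 y (hrW hy)
  obtain ⟨κ₀, hκ₀, h0⟩ := exists_tame_of_tame_fderiv ι hs
    (fun z hz => (hC2 z hz).differentiableAt two_ne_zero) hy₀s hκ₁ hρ h1
  refine ⟨ball x r, fun z hz => hWU (hrW hz), isOpen_ball, mem_ball_self hr,
    κ₀ + κ₁ + κ₂, by positivity, fun y hy ξ η => ⟨?_, ?_, ?_⟩⟩
  · exact (h0 y hy).trans (by gcongr; linarith)
  · exact (h1 y hy η).trans (by gcongr; linarith)
  · exact (h2 y (hrW hy) ξ η).trans (by gcongr; linarith)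

/-- **Combined tameness estimates** (Corollary `cor:tame`): near every point of
`U₁` the zeroth, first and second order tameness estimates hold with a single
constant `κ`. -/
theorem tame_combined_estimates {H₁ H₂ : Type*}
    [NormedAddCommGroup H₁] [InnerProductSpace ℝ H₁] [CompleteSpace H₁]
    [NormedAddCommGroup H₂] [InnerProductSpace ℝ H₂] [CompleteSpace H₂]
    (ι : H₂ →L[ℝ] H₁) (hι_inj : Function.Injective ι)
    (hι_dense : DenseRange ι) (hι_norm : ∀ x : H₂, ‖ι x‖ ≤ ‖x‖)
    {U₁ : Set H₁} (hU₁ : IsOpen U₁)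
    {φ : H₁ → H₁} {φ₂ : H₂ → H₂} (hφ : IsTame ι U₁ φ φ₂) :
    ∀ x ∈ U₁, ∃ W : Set H₁, W ⊆ U₁ ∧ IsOpen W ∧ x ∈ W ∧ ∃ κ : ℝ, 0 < κ ∧
      ∀ y : H₂, ι y ∈ W → ∀ ξ η : H₂,
        ‖φ₂ y‖ ≤ κ * (1 + ‖y‖) ∧
        ‖fderiv ℝ φ₂ y η‖ ≤ κ * (‖η‖ + ‖y‖ * ‖ι η‖) ∧
        ‖fderiv ℝ (fderiv ℝ φ₂) y ξ η‖ ≤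
          κ * (‖ι ξ‖ * ‖η‖ + ‖ξ‖ * ‖ι η‖ + ‖y‖ * ‖ι ξ‖ * ‖ι η‖) :=
  tame_combined_estimates_general ι hι_dense hι_norm hU₁ hφ
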